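/- Let s = Σ_{i,j} p_{ij} ℓ_i ℓ_j and let s_2 = Σ_{i,j,t} p_{ij} p_{it} ℓ_i ℓ_j ℓ_t. For a depth-k MFNG graph on n nodes, the variance of the number of edges |E| equals C(n,2)s^k(1 − C(n,2)s^k) + 2·n·C(n−1,2)·s_2^k + C(n,2)·C(n−2,2)·s^{2k}. -/

import Mathlib

open Finset

/-- The joint law of the edge indicators of a depth-`k` MFNG sample
`W_k(P, l)` on `n` nodes (edge configurations on unordered pairs of
distinct vertices, represented by pairs `p` with `p.1 < p.2`). -/
noncomputable def mfngLaw (m n k : ℕ) (P : Fin m → Fin m → ℝ) (l : Fin m → ℝ)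
    (E : {p : Fin n × Fin n // p.1 < p.2} → Bool) : ℝ :=
  ∑ c : Fin n → Fin k → Fin m,
    (∏ u, ∏ r, l (c u r)) *
      ∏ p : {p : Fin n × Fin n // p.1 < p.2},
        (if E p then ∏ r, P (c p.1.1 r) (c p.1.2 r)
         else 1 - ∏ r, P (c p.1.1 r) (c p.1.2 r))

/-- Number of edges of the configuration `E`. -/
def numEdges (n : ℕ) (E : {p : Fin n × Fin n // p.1 < p.2} → Bool) : ℕ :=
  (univ.filter fun p => E p = true).card

/-! The edge indicators are independent Bernoulli variables given the vertex labels, and the `k`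
levels are i.i.d.; hence the probability that all pairs of a set `S` are edges is the `k`-th power
of the probability `levelProb P l S` that they are all edges at one level. At one level only the
labels of the vertices covered by `S` matter, and these are i.i.d. with law `l`: one pair gives `s`,
two pairs sharing a vertex give `s₂` (this is where the symmetry of `P` enters), two disjoint pairs
give `s²`. So indicators of disjoint pairs are uncorrelated, and the variance is
`C(n,2) (s^k - s^{2k})` plus `s₂^k - s^{2k}` for each of the `C(n,2) · 2(n-2)` ordered pairs of
pairs sharing exactly one vertex. -/

open Function

section ProductSums

variable {ι κ α R : Type*} [Fintype ι] [DecidableEq ι] [Fintype κ] [DecidableEq κ] [Fintype α]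

theorem sum_prod_bernoulli_mul_prod_indicator [CommRing R] (q : ι → R) (S : Finset ι) :
    ∑ E : ι → Bool, (∏ i, if E i then q i else 1 - q i) * ∏ i ∈ S, (if E i then (1 : R) else 0)
      = ∏ i ∈ S, q i := by
  have hfactor : ∀ E : ι → Bool,
      (∏ i, if E i then q i else 1 - q i) * ∏ i ∈ S, (if E i then (1 : R) else 0)
        = ∏ i, (if E i then q i else 1 - q i) * (if i ∈ S then (if E i then 1 else 0) else 1) := by
    intro E
    rw [prod_mul_distrib, Fintype.prod_ite_mem]
  simp_rw [hfactor]
  rw [← Fintype.prod_sum (κ := fun _ => Bool) (fun i b => (if b then q i else 1 - q i) *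
    (if i ∈ S then (if b then (1 : R) else 0) else 1)), ← Fintype.prod_ite_mem S q]
  refine prod_congr rfl fun i _ => ?_
  by_cases hi : i ∈ S <;> simp [hi]

variable [CommSemiring R]

theorem sum_prod_mul_comp_inl (l : α → R) (hl : ∑ a, l a = 1) (F : (ι → α) → R) :
    ∑ d : ι ⊕ κ → α, (∏ u, l (d u)) * F (d ∘ Sum.inl) = ∑ v : ι → α, (∏ i, l (v i)) * F v := by
  have hκ : ∑ w : κ → α, ∏ j, l (w j) = 1 := by
    rw [← Fintype.prod_sum (fun _ a => l a)]
    simp [hl]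
  rw [← (Equiv.sumArrowEquivProdArrow ι κ α).symm.sum_comp, Fintype.sum_prod_type]
  refine sum_congr rfl fun v _ => ?_
  change ∑ w : κ → α, (∏ u, l (Sum.elim v w u)) * F (Sum.elim v w ∘ Sum.inl) = _
  simp only [Fintype.prod_sum_type, Sum.elim_inl, Sum.elim_inr, Sum.elim_comp_inl,
    mul_right_comm _ _ (F v), ← mul_sum, hκ, mul_one]

theorem sum_prod_mul_comp_of_injective (l : α → R) (hl : ∑ a, l a = 1) {e : ι → κ}
    (he : Injective e) (F : (ι → α) → R) :
    ∑ d : κ → α, (∏ u, l (d u)) * F (d ∘ e) = ∑ v : ι → α, (∏ i, l (v i)) * F v := by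
  classical
  let σ : ι ⊕ ↥(Set.range e)ᶜ ≃ κ :=
    (Equiv.sumCongr (Equiv.ofInjective e he) (Equiv.refl _)).trans
      (Equiv.Set.sumCompl (Set.range e))
  have hσe : σ.symm ∘ e = Sum.inl := funext fun i => σ.symm_apply_eq.2 rfl
  rw [← sum_prod_mul_comp_inl (κ := ↥(Set.range e)ᶜ) l hl F,
    ← (σ.arrowCongr (Equiv.refl α)).sum_comp]
  refine sum_congr rfl fun d _ => ?_
  rw [← σ.prod_comp]
  change (∏ u, l (d (σ.symm (σ u)))) * F (d ∘ σ.symm ∘ e) = _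
  simp only [Equiv.symm_apply_apply, hσe]

theorem sum_prod_mul_prod_eq_pow (τ : Type*) [Fintype τ] [DecidableEq τ] (l : α → R)
    (G : (ι → α) → R) :
    ∑ c : ι → τ → α, (∏ u, ∏ r, l (c u r)) * ∏ r, G (fun u => c u r)
      = (∑ d : ι → α, (∏ u, l (d u)) * G d) ^ Fintype.card τ := by
  rw [← card_univ, ← prod_const, Fintype.prod_sum (κ := fun _ => ι → α)]
  refine Fintype.sum_equiv (Equiv.piComm _) _ _ fun c => ?_
  rw [prod_mul_distrib, prod_comm]
  rfl

end ProductSums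

theorem Fintype.sum_fin_succ_pi {α M : Type*} [Fintype α] [AddCommMonoid M] {j : ℕ}
    (f : (Fin (j + 1) → α) → M) :
    ∑ v, f v = ∑ a, ∑ w : Fin j → α, f (Matrix.vecCons a w) := by
  rw [← (Fin.consEquiv fun _ => α).sum_comp, Fintype.sum_prod_type]
  rfl

abbrev VertexPair (n : ℕ) := {p : Fin n × Fin n // p.1 < p.2}

namespace VertexPair

variable {n : ℕ}

def verts (p : VertexPair n) : Finset (Fin n) := {p.1.1, p.1.2}

theorem card_filter_fst_eq (v : Fin n) : #{p : VertexPair n | p.1.1 = v} = n - 1 - v := by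
  rw [← Fin.card_Ioi]
  refine card_bij (fun p _ => p.1.2) (fun p hp => ?_) (fun p hp q hq h => ?_) (fun w hw => ?_)
  · simp only [mem_filter, mem_univ, true_and] at hp
    simpa [← hp] using p.2
  · simp only [mem_filter, mem_univ, true_and] at hp hq
    exact Subtype.ext (Prod.ext (hp.trans hq.symm) h)
  · exact ⟨⟨(v, w), by simpa using hw⟩, by simp, rfl⟩

theorem card_filter_snd_eq (v : Fin n) : #{p : VertexPair n | p.1.2 = v} = v := by
  rw [← Fin.card_Iio]
  refine card_bij (fun p _ => p.1.1) (fun p hp => ?_) (fun p hp q hq h => ?_) (fun w hw => ?_)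
  · simp only [mem_filter, mem_univ, true_and] at hp
    simpa [← hp] using p.2
  · simp only [mem_filter, mem_univ, true_and] at hp hq
    exact Subtype.ext (Prod.ext h (hp.trans hq.symm))
  · exact ⟨⟨(w, v), by simpa using hw⟩, by simp, rfl⟩

theorem card_filter_mem_verts (v : Fin n) : #{p : VertexPair n | v ∈ p.verts} = n - 1 := by
  have hmem : ∀ p : VertexPair n, v ∈ p.verts ↔ p.1.1 = v ∨ p.1.2 = v := by
    simp [verts, eq_comm]
  have hdisj : Disjoint (α := Finset (VertexPair n)) {p | p.1.1 = v} {p | p.1.2 = v} := by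
    rw [disjoint_filter]
    rintro p - h1 h2
    exact p.2.ne (h1.trans h2.symm)
  simp_rw [hmem, filter_or]
  rw [card_union_of_disjoint hdisj, card_filter_fst_eq, card_filter_snd_eq]
  omega

theorem card_eq_choose_two : Fintype.card (VertexPair n) = n.choose 2 := by
  rw [← card_univ, card_eq_sum_card_fiberwise (f := fun p : VertexPair n => p.1.1) (t := univ)
    (fun _ _ => mem_univ _)]
  simp only [card_filter_fst_eq]
  rw [Fin.sum_univ_eq_sum_range (fun i => n - 1 - i), sum_range_reflect (fun i => i) n,
    sum_range_id, Nat.choose_two_right]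

theorem card_filter_ne_not_disjoint (p : VertexPair n) :
    #{q : VertexPair n | q ≠ p ∧ ¬Disjoint p.verts q.verts} = 2 * (n - 2) := by
  set A : Finset (VertexPair n) := {q | p.1.1 ∈ q.verts}
  set B : Finset (VertexPair n) := {q | p.1.2 ∈ q.verts}
  have hset : ({q | q ≠ p ∧ ¬Disjoint p.verts q.verts} : Finset (VertexPair n))
      = (A ∪ B).erase p := by
    ext q
    simp only [A, B, verts, mem_erase, mem_union, mem_filter, mem_univ, true_and,
      disjoint_insert_left, disjoint_singleton_left, mem_insert, mem_singleton]
    tauto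
  have hinter : A ∩ B = {p} := by
    ext ⟨⟨c, d⟩, hcd⟩
    obtain ⟨⟨a, b⟩, hab⟩ := p
    simp only [A, B, verts, mem_inter, mem_filter, mem_univ, true_and, mem_insert,
      mem_singleton, Subtype.mk.injEq, Prod.mk.injEq]
    change c < d at hcd
    change a < b at hab
    omega
  have hp : p ∈ A ∪ B := by simp [A, verts]
  have hcard := card_union_add_card_inter A B
  rw [hinter, card_singleton, card_filter_mem_verts, card_filter_mem_verts] at hcard
  have hn : 2 ≤ n := by
    have := p.2
    have := p.1.2.isLt
    omega
  rw [hset, card_erase_of_mem hp]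
  omega

end VertexPair

theorem numEdges_eq_sum {n : ℕ} (E : VertexPair n → Bool) :
    (numEdges n E : ℝ) = ∑ p, if E p then 1 else 0 := by
  rw [numEdges, natCast_card_filter]

theorem numEdges_sq_eq_sum {n : ℕ} (E : VertexPair n → Bool) :
    (numEdges n E : ℝ) ^ 2 = ∑ p, ∑ q, ∏ r ∈ {p, q}, if E r then 1 else 0 := by
  rw [sq, numEdges_eq_sum, sum_mul_sum]
  refine sum_congr rfl fun p _ => sum_congr rfl fun q _ => ?_
  rcases eq_or_ne p q with rfl | hpq
  · by_cases hE : E p <;> simp [hE]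
  · rw [prod_pair hpq]

section MFNG

variable {m n : ℕ} (P : Fin m → Fin m → ℝ) (l : Fin m → ℝ) (k : ℕ)

/-- Probability that all pairs of `S` are edges at a single level, where every vertex receives an
independent `l`-distributed label. -/
noncomputable def levelProb (S : Finset (VertexPair n)) : ℝ :=
  ∑ d : Fin n → Fin m, (∏ u, l (d u)) * ∏ p ∈ S, P (d p.1.1) (d p.1.2)

/-- The quantity `s` of the statement. -/
noncomputable def edgeProb : ℝ := ∑ i, ∑ j, P i j * l i * l j

/-- The quantity `s₂` of the statement. -/
noncomputable def wedgeProb : ℝ := ∑ i, ∑ j, ∑ t, P i j * P i t * l i * l j * l t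

theorem sum_mfngLaw_mul_prod_indicator (S : Finset (VertexPair n)) :
    ∑ E, mfngLaw m n k P l E * ∏ p ∈ S, (if E p then (1 : ℝ) else 0) = levelProb P l S ^ k := by
  have hlevels := sum_prod_mul_prod_eq_pow (Fin k) l fun d => ∏ p ∈ S, P (d p.1.1) (d p.1.2)
  rw [Fintype.card_fin] at hlevels
  unfold mfngLaw
  simp_rw [sum_mul, mul_assoc]
  rw [sum_comm]
  simp_rw [← mul_sum, sum_prod_bernoulli_mul_prod_indicator]
  rw [levelProb, ← hlevels]
  exact sum_congr rfl fun c _ => congrArg _ prod_comm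

theorem sum_mfngLaw_mul_numEdges :
    ∑ E, mfngLaw m n k P l E * numEdges n E = ∑ p : VertexPair n, levelProb P l {p} ^ k := by
  simp_rw [numEdges_eq_sum, mul_sum]
  rw [sum_comm]
  exact sum_congr rfl fun p _ => by
    simpa only [prod_singleton] using sum_mfngLaw_mul_prod_indicator P l k {p}

theorem sum_mfngLaw_mul_numEdges_sq :
    ∑ E, mfngLaw m n k P l E * (numEdges n E : ℝ) ^ 2
      = ∑ p : VertexPair n, ∑ q, levelProb P l {p, q} ^ k := by
  simp_rw [numEdges_sq_eq_sum, mul_sum]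
  rw [sum_comm]
  refine sum_congr rfl fun p _ => ?_
  rw [sum_comm]
  exact sum_congr rfl fun q _ => sum_mfngLaw_mul_prod_indicator P l k {p, q}

theorem sum_mfngLaw_variance_eq_sum_covariance :
    (∑ E, mfngLaw m n k P l E * (numEdges n E : ℝ) ^ 2)
        - (∑ E, mfngLaw m n k P l E * (numEdges n E : ℝ)) ^ 2
      = ∑ p : VertexPair n, ∑ q,
          (levelProb P l {p, q} ^ k - levelProb P l {p} ^ k * levelProb P l {q} ^ k) := by
  rw [sum_mfngLaw_mul_numEdges_sq, sum_mfngLaw_mul_numEdges, sq, sum_mul_sum]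
  simp only [sum_sub_distrib]

variable {P l}

theorem levelProb_singleton (hl : ∑ i, l i = 1) (p : VertexPair n) :
    levelProb P l {p} = edgeProb P l := by
  obtain ⟨⟨a, b⟩, hab : a < b⟩ := p
  have hinj : Injective ![a, b] := by
    intro i j
    fin_cases i <;> fin_cases j <;> simp <;> omega
  simp only [levelProb, prod_singleton]
  refine (sum_prod_mul_comp_of_injective l hl hinj fun v => P (v 0) (v 1)).trans ?_
  simp [Fintype.sum_fin_succ_pi, Fin.prod_univ_succ, edgeProb, mul_comm, mul_left_comm]

theorem levelProb_pair_of_not_disjoint (hsymm : ∀ i j, P i j = P j i) (hl : ∑ i, l i = 1)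
    {p q : VertexPair n} (hne : p ≠ q) (h : ¬Disjoint p.verts q.verts) :
    levelProb P l {p, q} = wedgeProb P l := by
  obtain ⟨x, y, z, hxy, hxz, hyz, hwedge⟩ : ∃ x y z : Fin n, x ≠ y ∧ x ≠ z ∧ y ≠ z ∧
      ∀ d : Fin n → Fin m,
        ∏ r ∈ {p, q}, P (d r.1.1) (d r.1.2) = P (d x) (d y) * P (d x) (d z) := by
    obtain ⟨⟨a, b⟩, hab : a < b⟩ := p
    obtain ⟨⟨c, c'⟩, hcc' : c < c'⟩ := q
    simp only [prod_pair hne]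
    simp only [VertexPair.verts, ne_eq, Subtype.mk.injEq, Prod.mk.injEq, disjoint_insert_left,
      disjoint_singleton_left, mem_insert, mem_singleton, not_and, not_not] at hne h
    rcases (em (a = c ∨ a = c')).elim Or.inl (Or.inr ∘ h) with (rfl | rfl) | (rfl | rfl)
    · exact ⟨a, b, c', by omega, by omega, by omega, fun _ => rfl⟩
    · exact ⟨a, b, c, by omega, by omega, by omega, fun e => by rw [hsymm (e c)]⟩
    · exact ⟨b, a, c', by omega, by omega, by omega, fun e => by rw [hsymm (e a)]⟩
    · exact ⟨b, a, c, by omega, by omega, by omega, fun e => by rw [hsymm (e a), hsymm (e c)]⟩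
  have hinj : Injective ![x, y, z] := by
    intro i j
    fin_cases i <;> fin_cases j <;> simp <;> omega
  simp only [levelProb, hwedge]
  refine (sum_prod_mul_comp_of_injective l hl hinj fun v => P (v 0) (v 1) * P (v 0) (v 2)).trans ?_
  simp [Fintype.sum_fin_succ_pi, Fin.prod_univ_succ, wedgeProb, mul_comm, mul_left_comm]

theorem levelProb_pair_of_disjoint (hl : ∑ i, l i = 1) {p q : VertexPair n}
    (h : Disjoint p.verts q.verts) :
    levelProb P l {p, q} = edgeProb P l ^ 2 := by
  obtain ⟨⟨a, b⟩, hab : a < b⟩ := p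
  obtain ⟨⟨c, d⟩, hcd : c < d⟩ := q
  simp only [VertexPair.verts, disjoint_insert_left, disjoint_singleton_left, mem_insert,
    mem_singleton, not_or] at h
  have hne : (⟨(a, b), hab⟩ : VertexPair n) ≠ ⟨(c, d), hcd⟩ := by
    simp [h.1.1]
  have hinj : Injective ![a, b, c, d] := by
    intro i j
    fin_cases i <;> fin_cases j <;> simp <;> omega
  simp only [levelProb, prod_pair hne]
  refine (sum_prod_mul_comp_of_injective l hl hinj fun v => P (v 0) (v 1) * P (v 2) (v 3)).trans ?_
  rw [edgeProb, sq]
  simp_rw [sum_mul, mul_sum]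
  simp [Fintype.sum_fin_succ_pi, Fin.prod_univ_succ, mul_comm, mul_left_comm]

theorem levelProb_pair_pow_sub (hsymm : ∀ i j, P i j = P j i) (hl : ∑ i, l i = 1)
    (p q : VertexPair n) :
    levelProb P l {p, q} ^ k - levelProb P l {p} ^ k * levelProb P l {q} ^ k
      = (if q = p then edgeProb P l ^ k - edgeProb P l ^ k * edgeProb P l ^ k else 0)
        + (if q ≠ p ∧ ¬Disjoint p.verts q.verts
            then wedgeProb P l ^ k - edgeProb P l ^ k * edgeProb P l ^ k else 0) := by
  rw [levelProb_singleton hl, levelProb_singleton hl]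
  rcases eq_or_ne q p with rfl | hqp
  · simp [levelProb_singleton hl]
  by_cases hdisj : Disjoint p.verts q.verts
  · rw [levelProb_pair_of_disjoint hl hdisj, sq, mul_pow]
    simp [hqp, hdisj]
  · rw [levelProb_pair_of_not_disjoint hsymm hl hqp.symm hdisj]
    simp [hqp, hdisj]

theorem sum_levelProb_pair_pow_sub (hsymm : ∀ i j, P i j = P j i) (hl : ∑ i, l i = 1)
    (p : VertexPair n) :
    ∑ q, (levelProb P l {p, q} ^ k - levelProb P l {p} ^ k * levelProb P l {q} ^ k)
      = edgeProb P l ^ k - edgeProb P l ^ k * edgeProb P l ^ k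
        + ((2 * (n - 2) : ℕ) : ℝ) * (wedgeProb P l ^ k - edgeProb P l ^ k * edgeProb P l ^ k) := by
  simp_rw [levelProb_pair_pow_sub k hsymm hl p]
  rw [sum_add_distrib, sum_ite_eq', if_pos (mem_univ _), ← sum_filter, sum_const,
    VertexPair.card_filter_ne_not_disjoint, nsmul_eq_mul]

end MFNG

theorem Nat.choose_two_add_two (N : ℕ) : (N + 2).choose 2 = 1 + 2 * N + N.choose 2 := by
  simp only [Nat.choose_succ_succ, Nat.choose_zero_right, Nat.succ_eq_add_one, zero_add,
    Nat.choose_one_right, Nat.reduceAdd]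
  omega

theorem choose_two_mul_covariance_sum_eq (n : ℕ) (a b : ℝ) :
    (n.choose 2 : ℝ) * (a - a * a + ((2 * (n - 2) : ℕ) : ℝ) * (b - a * a))
      = n.choose 2 * a * (1 - n.choose 2 * a) + 2 * (n * ((n - 1).choose 2 : ℝ) * b)
        + n.choose 2 * ((n - 2).choose 2 : ℝ) * (a * a) := by
  rcases n with _ | _ | N
  · simp
  · simp
  · simp only [Nat.add_sub_cancel, Nat.choose_two_add_two]
    push_cast [Nat.cast_choose_two]
    ring

theorem mfng_edge_count_variance_general (m n k : ℕ)
    (P : Fin m → Fin m → ℝ)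
    (hsymm : ∀ i j, P i j = P j i)
    (l : Fin m → ℝ) (hl1 : ∑ i, l i = 1) :
    (∑ E : {p : Fin n × Fin n // p.1 < p.2} → Bool,
        mfngLaw m n k P l E * (numEdges n E : ℝ) ^ 2) -
      (∑ E : {p : Fin n × Fin n // p.1 < p.2} → Bool,
        mfngLaw m n k P l E * (numEdges n E : ℝ)) ^ 2
    = (n.choose 2 : ℝ) * (∑ i, ∑ j, P i j * l i * l j) ^ k *
          (1 - (n.choose 2 : ℝ) * (∑ i, ∑ j, P i j * l i * l j) ^ k)
      + 2 * ((n : ℝ) * ((n - 1).choose 2 : ℝ) *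
          (∑ i, ∑ j, ∑ t, P i j * P i t * l i * l j * l t) ^ k)
      + (n.choose 2 : ℝ) * ((n - 2).choose 2 : ℝ) *
          (∑ i, ∑ j, P i j * l i * l j) ^ (2 * k) := by
  rw [sum_mfngLaw_variance_eq_sum_covariance]
  simp_rw [sum_levelProb_pair_pow_sub k hsymm hl1]
  rw [sum_const, card_univ, VertexPair.card_eq_choose_two, nsmul_eq_mul, two_mul k, pow_add]
  exact choose_two_mul_covariance_sum_eq n _ _

/-- the variance of the number of edges `|E|` of a depth-`k`
MFNG graph equals
`C(n,2) s^k (1 − C(n,2) s^k) + 2 n C(n−1,2) s₂^k + C(n,2) C(n−2,2) s^{2k}`,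
where `s = ∑ i j, p_{ij} l_i l_j` and
`s₂ = ∑ i j t, p_{ij} p_{it} l_i l_j l_t` (so `E[S₂] = n C(n−1,2) s₂^k`). -/
theorem mfng_edge_count_variance (m n k : ℕ)
    (P : Fin m → Fin m → ℝ)
    (hsymm : ∀ i j, P i j = P j i)
    (hP0 : ∀ i j, 0 ≤ P i j) (hP1 : ∀ i j, P i j ≤ 1)
    (l : Fin m → ℝ) (hl0 : ∀ i, 0 ≤ l i) (hl1 : ∑ i, l i = 1) :
    (∑ E : {p : Fin n × Fin n // p.1 < p.2} → Bool,
        mfngLaw m n k P l E * (numEdges n E : ℝ) ^ 2) -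
      (∑ E : {p : Fin n × Fin n // p.1 < p.2} → Bool,
        mfngLaw m n k P l E * (numEdges n E : ℝ)) ^ 2
    = (n.choose 2 : ℝ) * (∑ i, ∑ j, P i j * l i * l j) ^ k *
          (1 - (n.choose 2 : ℝ) * (∑ i, ∑ j, P i j * l i * l j) ^ k)
      + 2 * ((n : ℝ) * ((n - 1).choose 2 : ℝ) *
          (∑ i, ∑ j, ∑ t, P i j * P i t * l i * l j * l t) ^ k)
      + (n.choose 2 : ℝ) * ((n - 2).choose 2 : ℝ) *
          (∑ i, ∑ j, P i j * l i * l j) ^ (2 * k) :=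
  mfng_edge_count_variance_general m n k P hsymm l hl1
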